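/- arXiv:1912.07647 — 3 statements merged into one kernel-verified Lean document; each statement's English description precedes it below -/
import Mathlib

section
/- For every integer t ≥ 1, every graph G with no odd K_t minor has independence number α(G) ≥ |V(G)|/(2t). -/
open SimpleGraph

universe u v

/-- The density `e(G)/v(G)` of a graph. -/
noncomputable def GraphDensity {V : Type u} (G : SimpleGraph V) : ℝ :=
  (Nat.card G.edgeSet : ℝ) / (Nat.card V : ℝ)

/-- A graph is bipartite: there is a 2-coloring with no monochromatic edge. -/
def IsBipartiteGraph {V : Type u} (G : SimpleGraph V) : Prop :=
  ∃ c : V → Bool, ∀ x y : V, G.Adj x y → c x ≠ c y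

/-- The branch sets of an expansion: pairwise vertex-disjoint subgraphs of `G`,
each of which is a tree. -/
def IsExpansionShape {V : Type u} {W : Type v} (G : SimpleGraph V)
    (T : W → G.Subgraph) : Prop :=
  (∀ w : W, (T w).coe.IsTree) ∧
  ∀ w w' : W, w ≠ w' → Disjoint (T w).verts (T w').verts

/-- `G` has an `H` minor: there is an `H`-expansion in `G`. -/
def HasMinor {V : Type u} {W : Type v} (G : SimpleGraph V) (H : SimpleGraph W) : Prop :=
  ∃ T : W → G.Subgraph, IsExpansionShape G T ∧
    ∀ w w' : W, H.Adj w w' →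
      ∃ x ∈ (T w).verts, ∃ y ∈ (T w').verts, G.Adj x y

/-- `G` has an odd `H` minor: there is an `H`-expansion in `G` together with a
2-coloring such that every edge of every tree of the expansion is bichromatic and
for every edge of `H` a monochromatic connecting edge of `G` can be chosen. -/
def HasOddMinor {V : Type u} {W : Type v} (G : SimpleGraph V) (H : SimpleGraph W) : Prop :=
  ∃ (T : W → G.Subgraph) (c : V → Bool),
    IsExpansionShape G T ∧
    (∀ (w : W) (x y : V), (T w).Adj x y → c x ≠ c y) ∧
    ∀ w w' : W, H.Adj w w' →
      ∃ x ∈ (T w).verts, ∃ y ∈ (T w').verts, G.Adj x y ∧ c x = c y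

/-- `G` has a bipartite `H` minor: there is an `H`-expansion in `G` whose union
(trees plus chosen connecting edges) is a bipartite subgraph of `G`. -/
def HasBipartiteMinor {V : Type u} {W : Type v} (G : SimpleGraph V) (H : SimpleGraph W) : Prop :=
  ∃ (T : W → G.Subgraph) (c : V → Bool),
    IsExpansionShape G T ∧
    (∀ (w : W) (x y : V), (T w).Adj x y → c x ≠ c y) ∧
    ∀ w w' : W, H.Adj w w' →
      ∃ x ∈ (T w).verts, ∃ y ∈ (T w').verts, G.Adj x y ∧ c x ≠ c y

/-- `(A, B)` is a separation of `G`. -/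
def IsSeparation {V : Type u} (G : SimpleGraph V) (A B : Set V) : Prop :=
  A ∪ B = Set.univ ∧
  ∀ x y : V, G.Adj x y → (x ∈ A ∧ y ∈ A) ∨ (x ∈ B ∧ y ∈ B)

/-- `G` is weakly `k`-connected: for every proper separation `(A, B)` of order at
most `k`, `min {|A − B|, |B − A|} < |A ∩ B|`. -/
def WeaklyConnected {V : Type u} (G : SimpleGraph V) (k : ℕ) : Prop :=
  ∀ A B : Set V, IsSeparation G A B → (A \ B).Nonempty → (B \ A).Nonempty →
    (A ∩ B).ncard ≤ k →
    min (A \ B).ncard (B \ A).ncard < (A ∩ B).ncard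

/-- `G` is `k`-connected (so its vertex connectivity `κ(G)` is at least `k`):
`G` has more than `k` vertices and deleting fewer than `k` vertices leaves it connected. -/
def IsKConnected {V : Type u} (G : SimpleGraph V) (k : ℕ) : Prop :=
  k < Nat.card V ∧
  ∀ S : Set V, S.ncard < k → (G.induce (Sᶜ : Set V)).Connected

/-- A family of pairwise vertex-disjoint paths. -/
def IsDisjointPathFamily {V : Type u} {G : SimpleGraph V} {n : ℕ}
    {a b : Fin n → V} (P : ∀ i, G.Walk (a i) (b i)) : Prop :=
  (∀ i, (P i).IsPath) ∧
  ∀ i j, i ≠ j → ∀ w : V, w ∈ (P i).support → w ∉ (P j).support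

/-- The set `S` (of size `2l`) is linked in `G`: for every ordered partition of `S`
into `l` pairs there is a corresponding linkage. -/
def LinkedSet {V : Type u} (G : SimpleGraph V) (l : ℕ) (S : Set V) : Prop :=
  ∀ s t : Fin l → V, (∀ i, s i ∈ S) → (∀ i, t i ∈ S) →
    Function.Injective (Sum.elim s t) →
    ∃ P : ∀ i, G.Walk (s i) (t i), IsDisjointPathFamily P

/-- The set `S` (of size `2l`) is parity-linked in `G`: it is linked, and for every
ordered partition of `S` into `l` pairs and every `I ⊆ [l]` there is a linkage whose
`i`-th path has an odd number of edges exactly when `i ∈ I`. -/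
def ParityLinkedSet {V : Type u} (G : SimpleGraph V) (l : ℕ) (S : Set V) : Prop :=
  LinkedSet G l S ∧
  ∀ s t : Fin l → V, (∀ i, s i ∈ S) → (∀ i, t i ∈ S) →
    Function.Injective (Sum.elim s t) →
    ∀ I : Set (Fin l),
      ∃ P : ∀ i, G.Walk (s i) (t i),
        IsDisjointPathFamily P ∧ ∀ i, Odd (P i).length ↔ i ∈ I

/-- `G` is `l`-linked. -/
def IsLinkedGraph {V : Type u} (G : SimpleGraph V) (l : ℕ) : Prop :=
  2 * l ≤ Nat.card V ∧ ∀ S : Set V, S.ncard = 2 * l → LinkedSet G l S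

/-- `X` is joined to `Y` in `G`: there are `|X|` pairwise vertex-disjoint paths,
each with one end in `X` and the other end in `Y`. -/
def JoinedTo {V : Type u} (G : SimpleGraph V) (X Y : Set V) : Prop :=
  ∃ (t : X → V) (P : ∀ x : X, G.Walk x.1 (t x)),
    (∀ x, t x ∈ Y) ∧ (∀ x, (P x).IsPath) ∧
    ∀ x y : X, x ≠ y → ∀ w : V, w ∈ (P x).support → w ∉ (P y).support

/-- `p` is a parity-breaking path for the bipartite subgraph `H` of `G`: its ends
lie in `H`, it is otherwise vertex-disjoint from `H`, and `H ∪ p` contains an odd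
cycle (i.e. is not bipartite). -/
def IsParityBreakingPath {V : Type u} {G : SimpleGraph V} (H : G.Subgraph)
    {a b : V} (p : G.Walk a b) : Prop :=
  p.IsPath ∧ a ∈ H.verts ∧ b ∈ H.verts ∧
  (∀ w ∈ p.support, w ≠ a → w ≠ b → w ∉ H.verts) ∧
  ¬ IsBipartiteGraph (H ⊔ p.toSubgraph).coe

/-- `X` is parity-knitted in `G`: for every pair of partitions `(A, B)` and
`(X_1, …, X_r)` of `X` there are pairwise vertex-disjoint trees `T_1, …, T_r` in `G`
with `X_i ⊆ V(T_i)` such that `(A ∩ X_i, B ∩ X_i)` extends to the bipartition of `T_i`. -/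
def ParityKnitted {V : Type u} (G : SimpleGraph V) (X : Set V) : Prop :=
  ∀ A B : Set V, A ∪ B = X → Disjoint A B →
  ∀ (r : ℕ) (Xp : Fin r → Set V),
    (⋃ i, Xp i) = X → (∀ i, (Xp i).Nonempty) →
    (∀ i j, i ≠ j → Disjoint (Xp i) (Xp j)) →
    ∃ T : Fin r → G.Subgraph,
      (∀ i, (T i).coe.IsTree) ∧
      (∀ i j, i ≠ j → Disjoint (T i).verts (T j).verts) ∧
      (∀ i, Xp i ⊆ (T i).verts) ∧
      ∀ i, ∃ c : V → Bool,
        (∀ x y : V, (T i).Adj x y → c x ≠ c y) ∧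
        (∀ w ∈ A ∩ Xp i, c w = true) ∧ (∀ w ∈ B ∩ Xp i, c w = false)

/-!
Induct on `t`, and for fixed `t` on `|U|`, proving that `G[U]` contains an odd `K_t` model or an
independent set `S` with `|U| ≤ 2t|S|`. In a component `C` of `G[U]` grow a branch set with
bipartition `(A, B)` such that `A` is independent, `|B| < |A|`, and every other vertex of `C` has a
neighbour in `A`: while some vertex of `C` sees no vertex of `A`, connectivity of `C` gives an edge
`qr` with `q` outside the branch set and seeing no vertex of `A`, and `r` in `B` or adjacent to `A`;
put `q` into `A`, and `r` into `B` if it is new. An odd `K_{t-1}` model in `C \ (A ∪ B)` extends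
by this branch set, every new edge joining two first sides. Otherwise the larger of `A` and the
independent set of `C \ (A ∪ B)` has at least `|C|/2t` vertices, and it combines with the
independent set found for `U \ C`.
-/

lemma Pairwise.fin_cons {α : Type*} {r : α → α → Prop} (hr : ∀ ⦃x y⦄, r x y → r y x)
    {n : ℕ} {a : α} {f : Fin n → α} (ha : ∀ i, r a (f i))
    (hf : Pairwise fun i j => r (f i) (f j)) :
    Pairwise fun i j =>
      r ((Fin.cons a f : Fin (n + 1) → α) i) ((Fin.cons a f : Fin (n + 1) → α) j) := by
  intro i j hij
  induction i using Fin.cases <;> induction j using Fin.cases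
  · exact absurd rfl hij
  · exact ha _
  · exact hr (ha _)
  · exact hf fun h => hij (congrArg Fin.succ h)

namespace SimpleGraph

variable {V : Type*} {G : SimpleGraph V}

namespace Subgraph

lemma Connected.of_le_insert {H H' : G.Subgraph} {q r : V} (hH : H.Connected) (hle : H ≤ H')
    (hverts : H'.verts = insert q H.verts) (hr : r ∈ H.verts) (hrq : H'.Adj r q) :
    H'.Connected := by
  refine (connected_sup hH.preconnected (subgraphOfAdj_connected hrq.adj_sub).preconnected
    ⟨r, hr, by simp⟩).mono (sup_le hle (subgraphOfAdj_le_of_adj H' hrq)) ?_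
  rw [verts_sup, subgraphOfAdj_verts, hverts]
  ext x
  simp only [Set.mem_union, Set.mem_insert_iff, Set.mem_singleton_iff]
  grind

lemma Connected.exists_isTree_le {H : G.Subgraph} (h : H.Connected) :
    ∃ T ≤ H, T.verts = H.verts ∧ T.coe.IsTree := by
  obtain ⟨T, hle, hT⟩ := h.coe.exists_isTree_le
  let T' : G.Subgraph :=
    { verts := H.verts
      Adj x y := ∃ (hx : x ∈ H.verts) (hy : y ∈ H.verts), T.Adj ⟨x, hx⟩ ⟨y, hy⟩
      adj_sub := fun ⟨_, _, hxy⟩ => (hle hxy).adj_sub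
      edge_vert := fun ⟨hx, _⟩ => hx
      symm := ⟨fun _ _ ⟨hx, hy, hxy⟩ => ⟨hy, hx, hxy.symm⟩⟩ }
  have hcoe : T'.coe = T := by
    ext x y
    exact ⟨fun ⟨_, _, hxy⟩ => hxy, fun hxy => ⟨x.2, y.2, hxy⟩⟩
  exact ⟨T', ⟨subset_rfl, fun _ _ ⟨_, _, hxy⟩ => hle hxy⟩, rfl, hcoe ▸ hT⟩

end Subgraph

def betweenSubgraph (G : SimpleGraph V) (A B : Set V) : G.Subgraph where
  verts := A ∪ B
  Adj x y := G.Adj x y ∧ (x ∈ A ∧ y ∈ B ∨ x ∈ B ∧ y ∈ A)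
  adj_sub h := h.1
  edge_vert := by rintro x y ⟨-, ⟨hx, -⟩ | ⟨hx, -⟩⟩ <;> simp [hx]
  symm := ⟨fun _ _ ⟨h, hxy⟩ => ⟨h.symm, hxy.symm.imp And.symm And.symm⟩⟩

lemma betweenSubgraph_comm (G : SimpleGraph V) (A B : Set V) :
    G.betweenSubgraph A B = G.betweenSubgraph B A := by
  ext
  · simp only [betweenSubgraph, Set.mem_union, or_comm]
  · simp only [betweenSubgraph, or_comm]

lemma Subgraph.Connected.betweenSubgraph_insert_left {A B : Set V} {q r : V}
    (h : (G.betweenSubgraph A B).Connected) (hr : r ∈ B) (hqr : G.Adj q r) :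
    (G.betweenSubgraph (insert q A) B).Connected :=
  h.of_le_insert ⟨Set.union_subset_union_left B (Set.subset_insert q A), fun _ _ ⟨hxy, hAB⟩ =>
      ⟨hxy, hAB.imp (.imp_left (Set.mem_insert_of_mem q))
        (.imp_right (Set.mem_insert_of_mem q))⟩⟩
    Set.insert_union (Or.inr hr) ⟨hqr.symm, Or.inr ⟨hr, Set.mem_insert q A⟩⟩

lemma Subgraph.Connected.betweenSubgraph_insert_right {A B : Set V} {q r : V}
    (h : (G.betweenSubgraph A B).Connected) (hr : r ∈ A) (hqr : G.Adj q r) :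
    (G.betweenSubgraph A (insert q B)).Connected := by
  rw [betweenSubgraph_comm] at h ⊢
  exact h.betweenSubgraph_insert_left hr hqr

/-- An odd `K_t` model inside `U`: branch set `i` is `(P i).1 ∪ (P i).2`, coloured by its two
sides, and branch sets are joined through their first sides, so those edges are monochromatic. -/
structure IsOddCliqueModel (G : SimpleGraph V) (U : Set V) {t : ℕ}
    (P : Fin t → Set V × Set V) : Prop where
  subset : ∀ i, (P i).1 ∪ (P i).2 ⊆ U
  disjoint_sides : ∀ i, Disjoint (P i).1 (P i).2
  pairwise_disjoint : Pairwise fun i j => Disjoint ((P i).1 ∪ (P i).2) ((P j).1 ∪ (P j).2)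
  connected : ∀ i, (G.betweenSubgraph (P i).1 (P i).2).Connected
  nonempty : ∀ i, (P i).1.Nonempty
  adj : Pairwise fun i j => ∃ x ∈ (P i).1, ∃ y ∈ (P j).1, G.Adj x y

namespace IsOddCliqueModel

variable {U U' : Set V} {t : ℕ} {P : Fin t → Set V × Set V}

lemma mono (hP : G.IsOddCliqueModel U P) (hU : U ⊆ U') : G.IsOddCliqueModel U' P :=
  { hP with subset := fun i => (hP.subset i).trans hU }

theorem hasOddMinor (hP : G.IsOddCliqueModel U P) : HasOddMinor G (⊤ : SimpleGraph (Fin t)) := by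
  choose T hTle hTverts hTtree using fun i => (hP.connected i).exists_isTree_le
  have not_mem_fst : ∀ i, ∀ y ∈ (P i).2, ∀ j, y ∉ (P j).1 := by
    intro i y hy j hyj
    rcases eq_or_ne i j with rfl | hij
    · exact Set.disjoint_left.1 (hP.disjoint_sides i) hyj hy
    · exact Set.disjoint_left.1 (hP.pairwise_disjoint hij) (Or.inr hy) (Or.inl hyj)
  classical
  refine ⟨T, fun x => decide (∃ j, x ∈ (P j).1), ⟨hTtree, fun i j hij => ?_⟩,
    fun i x y hxy => ?_, fun i j hij => ?_⟩
  · rw [hTverts, hTverts]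
    exact hP.pairwise_disjoint hij
  · obtain ⟨-, ⟨hx, hy⟩ | ⟨hx, hy⟩⟩ := hTle i |>.2 hxy
    · simpa [not_mem_fst i y hy] using ⟨i, hx⟩
    · simpa [not_mem_fst i x hx] using ⟨i, hy⟩
  · obtain ⟨x, hx, y, hy, hxy⟩ := hP.adj hij
    refine ⟨x, hTverts i ▸ Or.inl hx, y, hTverts j ▸ Or.inl hy, hxy, ?_⟩
    simp only [decide_eq_decide]
    exact ⟨fun _ => ⟨j, hy⟩, fun _ => ⟨i, hx⟩⟩

end IsOddCliqueModel

def IsPreconnectedSet (G : SimpleGraph V) (C : Set V) : Prop :=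
  ∀ X ⊂ C, X.Nonempty → ∃ x ∈ X, ∃ y ∈ C \ X, G.Adj x y

lemma exists_component [Finite V] {U : Set V} (hU : U.Nonempty) :
    ∃ C ⊆ U, C.Nonempty ∧ (∀ x ∈ C, ∀ y ∈ U \ C, ¬ G.Adj x y) ∧
      G.IsPreconnectedSet C := by
  obtain ⟨C, ⟨hCU, hC, hclosed⟩, hmin⟩ := exists_minimal_of_wellFoundedLT
    (fun C => C ⊆ U ∧ C.Nonempty ∧ ∀ x ∈ C, ∀ y ∈ U \ C, ¬ G.Adj x y)
    ⟨U, subset_rfl, hU, by simp⟩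
  refine ⟨C, hCU, hC, hclosed, fun X hXC hX => ?_⟩
  by_contra! hXclosed
  refine hXC.not_subset (hmin ⟨hXC.subset.trans hCU, hX, fun x hx y hy hxy => ?_⟩ hXC.subset)
  by_cases hyC : y ∈ C
  · exact hXclosed x hx y ⟨hyC, hy.2⟩ hxy
  · exact hclosed x (hXC.subset hx) y ⟨hy.1, hyC⟩ hxy

structure IsBranch (G : SimpleGraph V) (C A B : Set V) : Prop where
  subset : A ∪ B ⊆ C
  disjoint : Disjoint A B
  connected : (G.betweenSubgraph A B).Connected
  indep : G.IsIndepSet A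
  card_lt : B.ncard < A.ncard

namespace IsBranch

variable {C A B : Set V} {q r : V}

lemma singleton {v : V} (hv : v ∈ C) : G.IsBranch C {v} ∅ where
  subset := by simpa using hv
  disjoint := Set.disjoint_empty _
  connected := Subgraph.singletonSubgraph_connected.mono
    ((singletonSubgraph_le_iff v _).2 (Set.mem_union_left _ rfl))
    (by simp [betweenSubgraph])
  indep := Set.pairwise_singleton _ _
  card_lt := by simp

variable [Finite V]

lemma insert_leaf (h : G.IsBranch C A B) (hqC : q ∈ C) (hq : q ∉ A ∪ B)
    (hqA : ∀ a ∈ A, ¬ G.Adj q a) (hr : r ∈ B) (hqr : G.Adj q r) :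
    G.IsBranch C (insert q A) B where
  subset := Set.insert_union ▸ Set.insert_subset hqC h.subset
  disjoint := Set.disjoint_insert_left.2 ⟨fun hqB => hq (Or.inr hqB), h.disjoint⟩
  connected := h.connected.betweenSubgraph_insert_left hr hqr
  indep := h.indep.insert fun a ha _ => ⟨hqA a ha, fun haq => hqA a ha haq.symm⟩
  card_lt := by
    rw [Set.ncard_insert_of_notMem fun hqA => hq (Or.inl hqA)]
    exact h.card_lt.trans (Nat.lt_succ_self _)

lemma insert_path (h : G.IsBranch C A B) (hqC : q ∈ C) (hrC : r ∈ C) (hq : q ∉ A ∪ B)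
    (hr : r ∉ A ∪ B) (hqA : ∀ a ∈ A, ¬ G.Adj q a) {a : V} (ha : a ∈ A) (hra : G.Adj r a)
    (hqr : G.Adj q r) : G.IsBranch C (insert q A) (insert r B) where
  subset := by
    rw [Set.insert_union, Set.union_insert]
    exact Set.insert_subset hqC (Set.insert_subset hrC h.subset)
  disjoint := by
    refine Set.disjoint_insert_left.2 ⟨?_, Set.disjoint_insert_right.2 ⟨?_, h.disjoint⟩⟩
    · rintro (rfl | hqB)
      · exact hqr.ne rfl
      · exact hq (Or.inr hqB)
    · exact fun hrA => hr (Or.inl hrA)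
  connected := (h.connected.betweenSubgraph_insert_right ha hra).betweenSubgraph_insert_left
    (Set.mem_insert r B) hqr
  indep := h.indep.insert fun a ha _ => ⟨hqA a ha, fun haq => hqA a ha haq.symm⟩
  card_lt := by
    rw [Set.ncard_insert_of_notMem fun hqA => hq (Or.inl hqA),
      Set.ncard_insert_of_notMem fun hrB => hr (Or.inr hrB)]
    exact Nat.succ_lt_succ h.card_lt

lemma exists_insert (h : G.IsBranch C A B)
    (hC : G.IsPreconnectedSet C) {u : V}
    (hu : u ∈ C \ (A ∪ B)) (huA : ∀ a ∈ A, ¬ G.Adj u a) :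
    ∃ q ∉ A, ∃ B', G.IsBranch C (insert q A) B' := by
  set D := A ∪ B ∪ {x ∈ C | ∃ a ∈ A, G.Adj x a}
  have hDC : D ⊂ C :=
    (Set.ssubset_iff_of_subset (Set.union_subset h.subset (Set.sep_subset C _))).2
      ⟨u, hu.1, by rintro (huAB | ⟨-, a, ha, hua⟩); exacts [hu.2 huAB, huA a ha hua]⟩
  have hA : A.Nonempty := Set.nonempty_of_ncard_ne_zero (h.card_lt.trans_le' (Nat.zero_le _)).ne'
  obtain ⟨r, hrD, q, ⟨hqC, hqD⟩, hrq⟩ := hC D hDC (hA.mono fun a ha => Or.inl (Or.inl ha))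
  have hq : q ∉ A ∪ B := fun hqAB => hqD (Or.inl hqAB)
  have hqA : ∀ a ∈ A, ¬ G.Adj q a := fun a ha hqa => hqD (Or.inr ⟨hqC, a, ha, hqa⟩)
  have hqA' : q ∉ A := fun hqA' => hq (Or.inl hqA')
  by_cases hr : r ∈ A ∪ B
  · have hrB : r ∈ B := hr.resolve_left fun hrA => hqA r hrA hrq.symm
    exact ⟨q, hqA', B, h.insert_leaf hqC hq hqA hrB hrq.symm⟩
  · obtain ⟨hrC, a, ha, hra⟩ := hrD.resolve_left hr
    exact ⟨q, hqA', insert r B, h.insert_path hqC hrC hq hr hqA ha hra hrq.symm⟩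

end IsBranch

lemma exists_isBranch_dominating [Finite V] {C : Set V} {v : V} (hv : v ∈ C)
    (hC : G.IsPreconnectedSet C) :
    ∃ A B, G.IsBranch C A B ∧ ∀ u ∈ C \ (A ∪ B), ∃ a ∈ A, G.Adj u a := by
  obtain ⟨⟨A, B⟩, hAB, hmax⟩ :=
    Set.exists_max_image {p : Set V × Set V | G.IsBranch C p.1 p.2} (fun p => p.1.ncard)
      (Set.toFinite _) ⟨({v}, ∅), IsBranch.singleton hv⟩
  refine ⟨A, B, hAB, fun u hu => ?_⟩
  by_contra! huA
  obtain ⟨q, hqA, B', hB'⟩ := hAB.exists_insert hC hu huA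
  have hle := hmax (insert q A, B') hB'
  rw [Set.ncard_insert_of_notMem hqA] at hle
  omega

lemma IsOddCliqueModel.cons {C A B : Set V} {t : ℕ} {P : Fin t → Set V × Set V}
    (hAB : G.IsBranch C A B) (hdom : ∀ u ∈ C \ (A ∪ B), ∃ a ∈ A, G.Adj u a)
    (hP : G.IsOddCliqueModel (C \ (A ∪ B)) P) :
    G.IsOddCliqueModel C (Fin.cons (A, B) P : Fin (t + 1) → Set V × Set V) where
  subset := Fin.forall_fin_succ.2 ⟨hAB.subset, fun i => (hP.subset i).trans Set.sdiff_subset⟩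
  disjoint_sides := Fin.forall_fin_succ.2 ⟨hAB.disjoint, hP.disjoint_sides⟩
  pairwise_disjoint := Pairwise.fin_cons
    (r := fun p q : Set V × Set V => Disjoint (p.1 ∪ p.2) (q.1 ∪ q.2)) (fun _ _ h => h.symm)
    (fun i => Set.disjoint_of_subset_right (hP.subset i) Set.disjoint_sdiff_right)
    hP.pairwise_disjoint
  connected := Fin.forall_fin_succ.2 ⟨hAB.connected, hP.connected⟩
  nonempty := Fin.forall_fin_succ.2
    ⟨Set.nonempty_of_ncard_ne_zero (hAB.card_lt.trans_le' (Nat.zero_le _)).ne', hP.nonempty⟩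
  adj := by
    refine Pairwise.fin_cons
      (r := fun p q : Set V × Set V => ∃ x ∈ p.1, ∃ y ∈ q.1, G.Adj x y)
      (fun _ _ ⟨x, hx, y, hy, hxy⟩ => ⟨y, hy, x, hx, hxy.symm⟩) (fun i => ?_) hP.adj
    obtain ⟨y, hy⟩ := hP.nonempty i
    obtain ⟨a, ha, hya⟩ := hdom y (hP.subset i (Or.inl hy))
    exact ⟨a, ha, y, hy, hya.symm⟩

lemma exists_oddCliqueModel_succ_or_indepSet [Finite V] {C : Set V} {t : ℕ} (hC : C.Nonempty)
    (hconn : G.IsPreconnectedSet C)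
    (ih : ∀ U : Set V, (∃ P : Fin t → Set V × Set V, G.IsOddCliqueModel U P) ∨
      ∃ S ⊆ U, G.IsIndepSet S ∧ U.ncard ≤ 2 * t * S.ncard) :
    (∃ P : Fin (t + 1) → Set V × Set V, G.IsOddCliqueModel C P) ∨
      ∃ S ⊆ C, G.IsIndepSet S ∧ C.ncard ≤ 2 * (t + 1) * S.ncard := by
  obtain ⟨A, B, hAB, hdom⟩ := exists_isBranch_dominating hC.some_mem hconn
  obtain ⟨P, hP⟩ | ⟨S, hSC, hS, hcard⟩ := ih (C \ (A ∪ B))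
  · exact Or.inl ⟨_, hP.cons hAB hdom⟩
  have hsplit : C.ncard = (C \ (A ∪ B)).ncard + A.ncard + B.ncard := by
    rw [add_assoc, ← Set.ncard_union_eq hAB.disjoint,
      Set.ncard_sdiff_add_ncard_of_subset hAB.subset]
  have hBA := hAB.card_lt
  by_cases hSA : S.ncard ≤ A.ncard
  · have htSA := Nat.mul_le_mul_left (2 * t) hSA
    exact Or.inr ⟨A, Set.subset_union_left.trans hAB.subset, hAB.indep, by nlinarith⟩
  · exact Or.inr ⟨S, hSC.trans Set.sdiff_subset, hS, by nlinarith⟩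

theorem exists_oddCliqueModel_or_indepSet [Finite V] (G : SimpleGraph V) (t : ℕ) (U : Set V) :
    (∃ P : Fin t → Set V × Set V, G.IsOddCliqueModel U P) ∨
      ∃ S ⊆ U, G.IsIndepSet S ∧ U.ncard ≤ 2 * t * S.ncard := by
  induction t generalizing U with
  | zero => exact Or.inl ⟨Fin.elim0, ⟨fun i => i.elim0, fun i => i.elim0, fun i => i.elim0,
      fun i => i.elim0, fun i => i.elim0, fun i => i.elim0⟩⟩
  | succ t ih =>
    induction U using WellFoundedLT.induction with | _ U IH
    rcases U.eq_empty_or_nonempty with rfl | hU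
    · exact Or.inr ⟨∅, subset_rfl, Set.pairwise_empty _, by simp⟩
    obtain ⟨C, hCU, hC, hsep, hconn⟩ := G.exists_component hU
    obtain ⟨P, hP⟩ | ⟨S, hSC, hS, hcardS⟩ :=
      exists_oddCliqueModel_succ_or_indepSet hC hconn ih
    · exact Or.inl ⟨P, hP.mono hCU⟩
    obtain ⟨P, hP⟩ | ⟨S', hS'U, hS', hcardS'⟩ :=
      IH (U \ C) (Set.sdiff_ssubset_left_iff.2 (by rwa [Set.inter_eq_right.2 hCU]))
    · exact Or.inl ⟨P, hP.mono Set.sdiff_subset⟩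
    have hdisj : Disjoint S S' :=
      Set.disjoint_of_subset hSC hS'U Set.disjoint_sdiff_right
    refine Or.inr ⟨S ∪ S', Set.union_subset (hSC.trans hCU) (hS'U.trans Set.sdiff_subset),
      Set.pairwise_union.2 ⟨hS, hS', fun x hx y hy _ => ?_⟩, ?_⟩
    · exact ⟨hsep x (hSC hx) y (hS'U hy), fun hyx => hsep x (hSC hx) y (hS'U hy) hyx.symm⟩
    · rw [Set.ncard_union_eq hdisj, ← Set.ncard_sdiff_add_ncard_of_subset hCU, mul_add]
      linarith

end SimpleGraph

theorem indep_number_of_no_odd_minor_general (t : ℕ)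
    (V : Type u) [Fintype V] (G : SimpleGraph V)
    (h : ¬ HasOddMinor G (⊤ : SimpleGraph (Fin t))) :
    ∃ S : Set V, (∀ x ∈ S, ∀ y ∈ S, ¬ G.Adj x y) ∧
      (Nat.card V : ℝ) / (2 * t) ≤ S.ncard := by
  obtain ⟨P, hP⟩ | ⟨S, -, hS, hcard⟩ := G.exists_oddCliqueModel_or_indepSet t Set.univ
  · exact absurd hP.hasOddMinor h
  refine ⟨S, fun x hx y hy hxy => hS hx hy hxy.ne hxy,
    div_le_of_le_mul₀ (by positivity) (by positivity) ?_⟩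
  rw [Set.ncard_univ, mul_comm] at hcard
  exact_mod_cast hcard

/-- For every integer t ≥ 1, every graph G with no odd `K_t` minor has
independence number α(G) ≥ |V(G)|/(2t). -/
theorem indep_number_of_no_odd_minor (t : ℕ) (ht : 1 ≤ t)
    (V : Type u) [Fintype V] (G : SimpleGraph V)
    (h : ¬ HasOddMinor G (⊤ : SimpleGraph (Fin t))) :
    ∃ S : Set V, (∀ x ∈ S, ∀ y ∈ S, ¬ G.Adj x y) ∧
      (Nat.card V : ℝ) / (2 * t) ≤ S.ncard :=
  indep_number_of_no_odd_minor_general t V G h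
end

section
/- Every non-null graph G contains a subgraph H whose vertex connectivity satisfies κ(H) ≥ d(G)/2, where d(G) = |E(G)|/|V(G)| is the density of G. -/
open SimpleGraph

universe u v

/-!
Mader's argument. For `k ≥ 2` call `H` dense (`IsMaderDense`) if `|H| ≥ 2k - 1` and
`‖H‖ > (2k - 3)(|H| - k + 1)`; a graph of density greater than `2(k - 1)` is dense. Among dense
subgraphs take one with fewest vertices. If `|H| = 2k - 1` the edge bound forces `H` to be
complete. Deleting a vertex of degree at most `2k - 3` keeps `H` dense, so all degrees are at
least `2k - 2`. If a set of fewer than `k` vertices separated `H` into sides `A` and `B`, each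
side would contain a vertex together with its neighbourhood, hence at least `2k - 1` vertices,
and since `|A| + |B| ≤ |H| + k - 1`, counting edges shows that `H[A]` or `H[B]` is again dense.
For `⌈d(G)/2⌉ ≤ 1` a single vertex or a single edge will do.
-/

namespace SimpleGraph

variable {V : Type u} {W : Type v}

theorem isKConnected_top {k : ℕ} (hk : k < Nat.card W) :
    IsKConnected (⊤ : SimpleGraph W) k := by
  have : Finite W := Nat.finite_of_card_ne_zero (by omega)
  refine ⟨hk, fun S hS => ?_⟩
  have : Nonempty ↥Sᶜ := by
    refine (Set.nonempty_compl.2 fun hS' => ?_).to_subtype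
    rw [hS', Set.ncard_univ] at hS
    omega
  rw [induce_top]
  exact connected_top

theorem eq_top_of_choose_two_le_ncard_edgeSet [Finite W] (G : SimpleGraph W)
    (h : (Nat.card W).choose 2 ≤ G.edgeSet.ncard) : G = ⊤ := by
  classical
  have := Fintype.ofFinite W
  by_contra hne
  have hlt := Set.ncard_lt_ncard (edgeSet_strict_mono (lt_top_iff_ne_top.2 hne)) (Set.toFinite _)
  simp only [← coe_edgeFinset, Set.ncard_coe_finset] at h hlt
  rw [card_edgeFinset_top_eq_card_choose_two, ← Nat.card_eq_fintype_card] at hlt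
  omega

namespace Subgraph

variable {G : SimpleGraph V}

theorem ncard_edgeSet_coe (H : G.Subgraph) : H.coe.edgeSet.ncard = H.edgeSet.ncard := by
  rw [← image_coe_edgeSet_coe,
    Set.ncard_image_of_injective _ (Sym2.map.injective Subtype.val_injective)]

theorem coe_singletonSubgraph_eq_top (v : V) : (G.singletonSubgraph v).coe = ⊤ := by
  ext ⟨x, hx⟩ ⟨y, hy⟩
  simp only [singletonSubgraph_verts, Set.mem_singleton_iff] at hx hy
  subst hx hy
  simp

theorem coe_subgraphOfAdj_eq_top {u v : V} (h : G.Adj u v) : (G.subgraphOfAdj h).coe = ⊤ := by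
  ext ⟨x, hx⟩ ⟨y, hy⟩
  simp only [subgraphOfAdj_verts, Set.mem_insert_iff, Set.mem_singleton_iff] at hx hy
  rcases hx with rfl | rfl <;> rcases hy with rfl | rfl <;> simp [h.ne, h.ne.symm, Sym2.eq_swap]

theorem ncard_edgeSet_le_deleteVerts_add [Finite V] (H : G.Subgraph) (v : V) :
    H.edgeSet.ncard ≤ (H.deleteVerts {v}).edgeSet.ncard + (H.neighborSet v).ncard := by
  have hsub :
      H.edgeSet ⊆ (H.deleteVerts {v}).edgeSet ∪ (fun w => s(v, w)) '' H.neighborSet v := by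
    intro e he
    induction e using Sym2.ind with
    | _ x y =>
      rw [Subgraph.mem_edgeSet] at he
      by_cases hx : x = v
      · subst hx; exact Or.inr ⟨y, he, rfl⟩
      by_cases hy : y = v
      · subst hy; exact Or.inr ⟨x, he.symm, Sym2.eq_swap⟩
      · exact Or.inl (by simp [he, hx, hy, H.edge_vert he, H.edge_vert he.symm])
  calc H.edgeSet.ncard
      ≤ ((H.deleteVerts {v}).edgeSet ∪ (fun w => s(v, w)) '' H.neighborSet v).ncard :=
        Set.ncard_le_ncard hsub
    _ ≤ _ := (Set.ncard_union_le _ _).trans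
        (Nat.add_le_add_left (Set.ncard_image_le (Set.toFinite _)) _)

def IsSeparation (H : G.Subgraph) (A B : Set V) : Prop :=
  A ∪ B = H.verts ∧ ∀ x y, H.Adj x y → (x ∈ A ∧ y ∈ A) ∨ (x ∈ B ∧ y ∈ B)

section Separation

variable {H : G.Subgraph} {A B : Set V}

theorem IsSeparation.ncard_edgeSet_le [Finite V] (h : H.IsSeparation A B) :
    H.edgeSet.ncard ≤ (H.induce A).edgeSet.ncard + (H.induce B).edgeSet.ncard := by
  have hsub : H.edgeSet ⊆ (H.induce A).edgeSet ∪ (H.induce B).edgeSet := by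
    intro e he
    induction e using Sym2.ind with
    | _ x y =>
      rw [Subgraph.mem_edgeSet] at he
      rcases h.2 x y he with ⟨hx, hy⟩ | ⟨hx, hy⟩
      · exact Or.inl ⟨hx, hy, he⟩
      · exact Or.inr ⟨hx, hy, he⟩
  exact (Set.ncard_le_ncard hsub).trans (Set.ncard_union_le _ _)

theorem IsSeparation.ncard_neighborSet_lt [Finite V] (h : H.IsSeparation A B) {a : V}
    (ha : a ∈ A \ B) : (H.neighborSet a).ncard < A.ncard := by
  refine Set.ncard_lt_ncard ((Set.ssubset_iff_of_subset fun y hy => ?_).2 ⟨a, ha.1, ?_⟩)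
  · rcases h.2 a y hy with ⟨-, hy⟩ | ⟨ha', -⟩
    · exact hy
    · exact absurd ha' ha.2
  · exact H.loopless.irrefl a

theorem isSeparation_union_sdiff {T R : Set V} (hT : T ⊆ H.verts) (hR : R ⊆ H.verts)
    (hRT : ∀ x ∈ R, ∀ y, H.Adj x y → y ∈ T ∪ R) :
    H.IsSeparation (T ∪ R) (H.verts \ R) := by
  refine ⟨?_, fun x y hxy => ?_⟩
  · rw [Set.union_assoc, Set.union_sdiff_self, Set.union_eq_right.2 hR, Set.union_eq_right.2 hT]
  by_cases hx : x ∈ R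
  · exact Or.inl ⟨Or.inr hx, hRT x hx y hxy⟩
  by_cases hy : y ∈ R
  · exact Or.inl ⟨hRT y hy x hxy.symm, Or.inr hy⟩
  · exact Or.inr ⟨⟨H.edge_vert hxy, hx⟩, H.edge_vert hxy.symm, hy⟩

theorem exists_isSeparation_of_not_isKConnected {k : ℕ} (hk : k < H.verts.ncard)
    (h : ¬IsKConnected H.coe k) :
    ∃ A B, H.IsSeparation A B ∧ (A ∩ B).ncard < k ∧
      (A \ B).Nonempty ∧ (B \ A).Nonempty := by
  rw [IsKConnected, Nat.card_coe_set_eq] at h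
  push Not at h
  obtain ⟨S, hSk, hS⟩ := h hk
  have : Nonempty ↥Sᶜ := by
    refine (Set.nonempty_compl.2 fun hS' => ?_).to_subtype
    rw [hS', Set.ncard_univ, Nat.card_coe_set_eq] at hSk
    omega
  obtain ⟨a, b, hab⟩ : ∃ a b, ¬(H.coe.induce Sᶜ).Reachable a b := by
    by_contra! h
    exact hS ⟨h⟩
  -- `T` is the separator `S` and `R` the component of `a` in `H - S`, both as subsets of `V`
  set T : Set V := Subtype.val '' S
  set R : Set V := (fun y => y.1.1) '' {y | (H.coe.induce Sᶜ).Reachable y a}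
  have hT : T ⊆ H.verts := by rintro _ ⟨y, -, rfl⟩; exact y.2
  have hR : R ⊆ H.verts := by rintro _ ⟨y, -, rfl⟩; exact y.1.2
  have hRT : ∀ x ∈ R, ∀ y, H.Adj x y → y ∈ T ∪ R := by
    rintro _ ⟨x, hxa, rfl⟩ y hxy
    have hy : y ∈ H.verts := H.edge_vert hxy.symm
    by_cases hyS : ⟨y, hy⟩ ∈ S
    · exact Or.inl ⟨_, hyS, rfl⟩
    · exact Or.inr ⟨⟨⟨y, hy⟩, hyS⟩, (Adj.reachable (by exact hxy.symm)).trans hxa, rfl⟩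
  have haR : a.1.1 ∈ R := ⟨a, .rfl, rfl⟩
  have hbR : b.1.1 ∉ R := by
    rintro ⟨y, hya, hyb⟩
    obtain rfl : y = b := Subtype.ext (Subtype.ext hyb)
    exact hab hya.symm
  have hbT : b.1.1 ∉ T := by
    rintro ⟨y, hyS, hyb⟩
    exact b.2 (Subtype.ext hyb ▸ hyS)
  refine ⟨T ∪ R, H.verts \ R, isSeparation_union_sdiff hT hR hRT, ?_,
    ⟨a, Or.inr haR, fun h => h.2 haR⟩, ⟨b, ⟨b.1.2, hbR⟩, by simp [hbT, hbR]⟩⟩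
  calc ((T ∪ R) ∩ (H.verts \ R)).ncard
      ≤ T.ncard := Set.ncard_le_ncard (fun x hx => hx.1.resolve_right hx.2.2)
        ((Set.finite_of_ncard_pos (by omega)).subset hT)
    _ = S.ncard := Set.ncard_image_of_injective S Subtype.val_injective
    _ < k := hSk

theorem IsSeparation.symm (h : H.IsSeparation A B) : H.IsSeparation B A :=
  ⟨Set.union_comm A B ▸ h.1, fun x y hxy => (h.2 x y hxy).symm⟩

theorem IsSeparation.ncard_lt [Finite V] (h : H.IsSeparation A B) (hB : (B \ A).Nonempty) :
    A.ncard < H.verts.ncard := by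
  obtain ⟨b, hbB, hbA⟩ := hB
  refine Set.ncard_lt_ncard ((Set.ssubset_iff_of_subset ?_).2 ⟨b, h.1 ▸ Or.inr hbB, hbA⟩)
  exact h.1 ▸ Set.subset_union_left

end Separation

def IsMaderDense (k : ℕ) (H : G.Subgraph) : Prop :=
  2 * k - 1 ≤ H.verts.ncard ∧ (2 * k - 3 : ℤ) * (H.verts.ncard - k + 1) < H.edgeSet.ncard

section Mader

variable [Finite V] {k : ℕ} {H : G.Subgraph}

theorem IsMaderDense.coe_eq_top (hk : 2 ≤ k) (h : H.IsMaderDense k)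
    (hn : H.verts.ncard = 2 * k - 1) : H.coe = ⊤ := by
  refine eq_top_of_choose_two_le_ncard_edgeSet _ ?_
  rw [Nat.card_coe_set_eq, ncard_edgeSet_coe, hn]
  obtain ⟨j, rfl⟩ : ∃ j, k = j + 2 := ⟨k - 2, by omega⟩
  have hchoose : (2 * (j + 2) - 1).choose 2 * 2 = (2 * j + 3) * (2 * j + 2) := by
    rw [Nat.choose_two_right, Nat.div_mul_cancel (Nat.even_mul_pred_self _).two_dvd]
    congr 1
  have h2 := h.2
  rw [hn] at h2
  zify at hchoose h2 ⊢
  push_cast [show 2 * (j + 2) - 1 = 2 * j + 3 by omega] at hchoose h2 ⊢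
  nlinarith

theorem IsMaderDense.deleteVerts (hk : 2 ≤ k) (h : H.IsMaderDense k)
    (hn : 2 * k ≤ H.verts.ncard) {v : V} (hv : v ∈ H.verts)
    (hdeg : (H.neighborSet v).ncard ≤ 2 * k - 3) :
    (H.deleteVerts {v}).IsMaderDense k := by
  have hverts : (H.deleteVerts {v}).verts.ncard + 1 = H.verts.ncard := by
    rw [deleteVerts_verts, Set.ncard_sdiff_singleton_add_one hv]
  have hedges := ncard_edgeSet_le_deleteVerts_add H v
  refine ⟨by omega, ?_⟩
  have h2 := h.2
  have hdeg' : ((H.neighborSet v).ncard : ℤ) ≤ 2 * k - 3 := by omega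
  zify at hverts hedges
  nlinarith

theorem IsMaderDense.induce_or_induce (hk : 2 ≤ k) (h : H.IsMaderDense k)
    (hdeg : ∀ v ∈ H.verts, 2 * k - 3 < (H.neighborSet v).ncard) {A B : Set V}
    (hsep : H.IsSeparation A B) (hAB : (A ∩ B).ncard < k) (hA : (A \ B).Nonempty)
    (hB : (B \ A).Nonempty) : (H.induce A).IsMaderDense k ∨ (H.induce B).IsMaderDense k := by
  have hverts : ∀ {C D : Set V}, H.IsSeparation C D → (C \ D).Nonempty →
      2 * k - 1 ≤ C.ncard := by
    rintro C D hCD ⟨c, hc⟩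
    have := hCD.ncard_neighborSet_lt hc
    have := hdeg c (hCD.1 ▸ Or.inl hc.1)
    omega
  by_contra! hcon
  simp only [IsMaderDense, induce_verts, hverts hsep hA, hverts hsep.symm hB, true_and, not_lt]
    at hcon
  have hunion := Set.ncard_union_add_ncard_inter A B
  rw [hsep.1] at hunion
  have hedges := hsep.ncard_edgeSet_le
  have h2 := h.2
  zify at hunion hedges hAB
  nlinarith

theorem IsMaderDense.exists_isKConnected (hk : 2 ≤ k) (h : H.IsMaderDense k) :
    ∃ H' ≤ H, IsKConnected H'.coe k := by
  induction hn : H.verts.ncard using Nat.strong_induction_on generalizing H with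
  | _ n ih =>
  have descend : ∀ H' ≤ H, H'.IsMaderDense k → H'.verts.ncard < n →
      ∃ H'' ≤ H, IsKConnected H''.coe k := fun H' hle hH' hlt =>
    let ⟨H'', hle', hconn⟩ := ih _ hlt hH' rfl
    ⟨H'', hle'.trans hle, hconn⟩
  have hsize := hn ▸ h.1
  by_cases hbase : n = 2 * k - 1
  · refine ⟨H, le_rfl, h.coe_eq_top hk (hn.trans hbase) ▸ isKConnected_top ?_⟩
    rw [Nat.card_coe_set_eq]
    omega
  by_cases hlow : ∃ v ∈ H.verts, (H.neighborSet v).ncard ≤ 2 * k - 3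
  · obtain ⟨v, hv, hdeg⟩ := hlow
    refine descend _ deleteVerts_le (h.deleteVerts hk (by omega) hv hdeg) ?_
    rw [deleteVerts_verts, ← hn]
    exact Set.ncard_sdiff_singleton_lt_of_mem hv
  by_cases hconn : IsKConnected H.coe k
  · exact ⟨H, le_rfl, hconn⟩
  push Not at hlow
  obtain ⟨A, B, hsep, hAB, hA, hB⟩ := exists_isSeparation_of_not_isKConnected (by omega) hconn
  have hinduce : ∀ {C D : Set V}, H.IsSeparation C D → H.induce C ≤ H := fun hCD =>
    (induce_mono_right (hCD.1 ▸ Set.subset_union_left)).trans induce_self_verts.le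
  rcases h.induce_or_induce hk hlow hsep hAB hA hB with hA' | hB'
  · exact descend _ (hinduce hsep) hA' (hn ▸ hsep.ncard_lt hB)
  · exact descend _ (hinduce hsep.symm) hB' (hn ▸ hsep.symm.ncard_lt hA)

theorem isMaderDense_top (hk : 2 ≤ k) (h : 2 * (k - 1) * Nat.card V < Nat.card G.edgeSet) :
    (⊤ : G.Subgraph).IsMaderDense k := by
  classical
  have := Fintype.ofFinite V
  have hchoose : Nat.card G.edgeSet ≤ (Nat.card V).choose 2 := by
    rw [Nat.card_eq_fintype_card, ← edgeFinset_card, Nat.card_eq_fintype_card]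
    exact card_edgeFinset_le_card_choose_two
  have hsquare : (Nat.card V).choose 2 * 2 ≤ Nat.card V * Nat.card V := by
    rw [Nat.choose_two_right, Nat.div_mul_cancel (Nat.even_mul_pred_self _).two_dvd]
    exact Nat.mul_le_mul_left _ (Nat.sub_le _ _)
  rw [Nat.card_coe_set_eq] at h hchoose
  simp only [IsMaderDense, verts_top, edgeSet_top, Set.ncard_univ]
  zify [show 1 ≤ k by omega] at h hchoose hsquare
  have hsize : (2 * k - 1 : ℤ) ≤ Nat.card V := by nlinarith
  exact ⟨by omega, by nlinarith⟩

end Mader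

end Subgraph

end SimpleGraph

open SimpleGraph

theorem lt_graphDensity_iff {V : Type u} [Finite V] [Nonempty V] {G : SimpleGraph V} {x : ℝ} :
    x < GraphDensity G ↔ x * Nat.card V < Nat.card G.edgeSet := by
  rw [GraphDensity, lt_div_iff₀ (by exact_mod_cast Nat.card_pos)]

/-- Every non-null graph G contains a subgraph H with vertex
connectivity κ(H) ≥ d(G)/2. -/
theorem mader_connected_subgraph (V : Type u) [Fintype V] [Nonempty V]
    (G : SimpleGraph V) :
    ∃ H : G.Subgraph, IsKConnected H.coe ⌈GraphDensity G / 2⌉₊ := by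
  set k := ⌈GraphDensity G / 2⌉₊
  obtain ⟨v⟩ := ‹Nonempty V›
  rcases Nat.eq_zero_or_pos k with hk0 | hk1
  · refine ⟨G.singletonSubgraph v, ?_⟩
    rw [Subgraph.coe_singletonSubgraph_eq_top, hk0]
    exact isKConnected_top (by simp)
  have hedges : 2 * (k - 1) * Nat.card V < Nat.card G.edgeSet := by
    have hhalf := Nat.lt_ceil.1 (show k - 1 < k by omega)
    have hlt : ((2 * (k - 1) : ℕ) : ℝ) < GraphDensity G := by push_cast; linarith
    exact_mod_cast lt_graphDensity_iff.1 hlt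
  obtain hk | hk : k = 1 ∨ 2 ≤ k := by omega
  · obtain ⟨a, b, hab⟩ : ∃ a b, G.Adj a b := by
      rw [← ne_bot_iff_exists_adj, ← edgeSet_nonempty, ← Set.nonempty_coe_sort]
      exact (Nat.card_pos_iff.1 (by omega)).1
    refine ⟨G.subgraphOfAdj hab, ?_⟩
    rw [Subgraph.coe_subgraphOfAdj_eq_top, hk]
    exact isKConnected_top (by simp [Set.ncard_pair hab.ne])
  · obtain ⟨H, -, hH⟩ := (Subgraph.isMaderDense_top hk hedges).exists_isKConnected hk
    exact ⟨H, hH⟩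
end

section
/- Every non-null graph G contains a bipartite subgraph H with vertex connectivity κ(H) ≥ max{ d(G)/4, (χ(G) − 1)/8 }, where d(G) is the density of G and χ(G) its chromatic number. -/
open SimpleGraph

universe u v

/-!
Let `k + 1` be the required connectivity. If `d(G) > 4k`, the whole vertex set spans more than
`4k |V|` edges; if `χ(G) > 8k + 1`, greedy colouring fails, so some vertex set `S` induces a
subgraph of minimum degree above `8k` and again spans more than `4k |S|` edges. A maximum cut
keeps at least half of these edges in a bipartite subgraph, which therefore has average degree
above `4k` on `S`, and Mader's theorem gives a `(k + 1)`-connected induced subgraph of it.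
-/

open Finset in
lemma Finset.exists_card_le_two_mul_card_filter_ne {α : Type*} (t : Finset α) (c : α → Bool) :
    ∃ b : Bool, #t ≤ 2 * #{w ∈ t | c w ≠ b} := by
  have hsplit : #{w ∈ t | c w ≠ true} + #{w ∈ t | c w ≠ false} = #t := by
    simpa using card_filter_add_card_filter_not (s := t) (fun w => c w ≠ true)
  by_cases h : #t ≤ 2 * #{w ∈ t | c w ≠ true}
  · exact ⟨true, h⟩
  · exact ⟨false, by omega⟩

namespace SimpleGraph

open Finset

section Counting

variable {V : Type*} (G : SimpleGraph V) [DecidableRel G.Adj]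

lemma card_interedges_self_le (s : Finset V) : #(G.interedges s s) ≤ #s * (#s - 1) := by
  calc #(G.interedges s s) ≤ #s.offDiag := by
        refine card_le_card fun p hp => ?_
        rw [mem_interedges_iff] at hp
        exact mem_offDiag.2 ⟨hp.1, hp.2.1, hp.2.2.ne⟩
    _ = #s * (#s - 1) := by rw [offDiag_card, Nat.mul_sub_one]

lemma card_interedges_self_eq_sum (s : Finset V) :
    #(G.interedges s s) = ∑ v ∈ s, #{w ∈ s | G.Adj v w} := by
  simp only [interedges_def, card_filter, sum_product]

lemma card_interedges_univ [Fintype V] :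
    #(G.interedges univ univ) = 2 * #G.edgeFinset := by
  rw [two_mul_card_edgeFinset, interedges_def, univ_product_univ]

lemma mul_card_lt_card_interedges_univ [Fintype V] {n : ℕ} (h : (n : ℝ) < 2 * GraphDensity G) :
    n * Fintype.card V < #(G.interedges univ univ) := by
  have hV : (0 : ℝ) < Nat.card V := by
    refine Nat.cast_pos.2 (Nat.pos_of_ne_zero fun hV => ?_)
    rw [GraphDensity, hV, Nat.cast_zero, div_zero, mul_zero] at h
    exact (Nat.cast_nonneg n).not_gt h
  rw [GraphDensity, mul_div_assoc', lt_div_iff₀ hV] at h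
  rw [card_interedges_univ, edgeFinset_card, ← Nat.card_eq_fintype_card,
    ← Nat.card_eq_fintype_card]
  exact_mod_cast h

variable [DecidableEq V]

lemma card_interedges_insert {s : Finset V} {v : V} (hv : v ∉ s) :
    #(G.interedges (insert v s) (insert v s)) =
      #(G.interedges s s) + 2 * #{w ∈ s | G.Adj v w} := by
  have hdeg (w : V) : #{x ∈ insert v s | G.Adj w x} =
      #{x ∈ s | G.Adj w x} + if G.Adj w v then 1 else 0 := by
    rw [filter_insert]
    split_ifs with h
    · exact card_insert_of_notMem fun hv' => hv (mem_filter.1 hv').1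
    · rfl
  have hback : ∑ w ∈ s, (if G.Adj w v then 1 else 0) = #{w ∈ s | G.Adj v w} := by
    rw [sum_boole, Nat.cast_id]
    simp only [G.adj_comm]
  rw [card_interedges_self_eq_sum, card_interedges_self_eq_sum, sum_insert hv, hdeg,
    if_neg (G.irrefl), sum_congr rfl fun w _ => hdeg w, sum_add_distrib, hback]
  ring

lemma card_interedges_erase {s : Finset V} {v : V} (hv : v ∈ s) :
    #(G.interedges s s) =
      #(G.interedges (s.erase v) (s.erase v)) + 2 * #{w ∈ s | G.Adj v w} := by
  conv_lhs => rw [← insert_erase hv]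
  rw [card_interedges_insert G (notMem_erase v s), filter_erase,
    erase_eq_of_notMem fun h => G.irrefl (mem_filter.1 h).2]

lemma card_interedges_self_le_add {s t₁ t₂ : Finset V}
    (h : ∀ x ∈ s, ∀ y ∈ s, G.Adj x y → x ∈ t₁ ∧ y ∈ t₁ ∨ x ∈ t₂ ∧ y ∈ t₂) :
    #(G.interedges s s) ≤ #(G.interedges t₁ t₁) + #(G.interedges t₂ t₂) := by
  refine (card_le_card fun p hp => ?_).trans (card_union_le _ _)
  rw [mem_interedges_iff] at hp
  rw [mem_union, mem_interedges_iff, mem_interedges_iff]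
  rcases h _ hp.1 _ hp.2.1 hp.2.2 with h | h
  exacts [.inl ⟨h.1, h.2, hp.2.2⟩, .inr ⟨h.1, h.2, hp.2.2⟩]

lemma card_filter_adj_lt_card {s t : Finset V} {v : V} (hv : v ∈ t)
    (h : ∀ w ∈ s, G.Adj v w → w ∈ t) : #{w ∈ s | G.Adj v w} < #t := by
  calc #{w ∈ s | G.Adj v w} ≤ #(t.erase v) := by
        refine card_le_card fun w hw => ?_
        rw [mem_filter] at hw
        exact mem_erase.2 ⟨(G.ne_of_adj hw.2).symm, h w hw.1 hw.2⟩
    _ < #t := card_erase_lt_of_mem hv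

end Counting

section Cut

variable {V : Type*} (G : SimpleGraph V)

def cutGraph (c : V → Bool) : SimpleGraph V where
  Adj x y := G.Adj x y ∧ c x ≠ c y
  symm := ⟨fun _ _ h => ⟨h.1.symm, h.2.symm⟩⟩
  loopless := ⟨fun _ h => G.irrefl h.1⟩

@[simp]
lemma cutGraph_adj {c : V → Bool} {x y : V} : (G.cutGraph c).Adj x y ↔ G.Adj x y ∧ c x ≠ c y :=
  Iff.rfl

instance [DecidableRel G.Adj] (c : V → Bool) : DecidableRel (G.cutGraph c).Adj :=
  fun _ _ => inferInstanceAs (Decidable (_ ∧ _))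

lemma cutGraph_le (c : V → Bool) : G.cutGraph c ≤ G := fun _ _ h => h.1

variable [DecidableEq V] [DecidableRel G.Adj]

lemma exists_card_interedges_le_two_mul_cutGraph (s : Finset V) :
    ∃ c : V → Bool, #(G.interedges s s) ≤ 2 * #((G.cutGraph c).interedges s s) := by
  induction s using Finset.induction_on with
  | empty => exact ⟨fun _ => true, by simp⟩
  | @insert v s hv ih =>
    obtain ⟨c, hc⟩ := ih
    -- colour `v` against the majority of its neighbours in `s`
    obtain ⟨b, hb⟩ := exists_card_le_two_mul_card_filter_ne {w ∈ s | G.Adj v w} c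
    set c' := Function.update c v b
    have hc' : ∀ w ∈ s, c' w = c w := fun w hw =>
      Function.update_of_ne (ne_of_mem_of_not_mem hw hv) _ _
    have hcut : (G.cutGraph c').interedges s s = (G.cutGraph c).interedges s s := by
      refine filter_congr fun p hp => ?_
      rw [mem_product] at hp
      simp only [cutGraph_adj, hc' _ hp.1, hc' _ hp.2]
    have hdeg : #{w ∈ s | (G.cutGraph c').Adj v w} = #{w ∈ {w ∈ s | G.Adj v w} | c w ≠ b} := by
      rw [filter_filter]
      refine congrArg card (filter_congr fun w hw => ?_)
      simp only [cutGraph_adj, c', Function.update_self, hc' w hw, ne_comm]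
    refine ⟨c', ?_⟩
    rw [card_interedges_insert _ hv, card_interedges_insert _ hv, hcut, hdeg]
    omega

end Cut

section Degeneracy

variable {V : Type*} [Fintype V] (G : SimpleGraph V) [DecidableRel G.Adj]

variable [DecidableEq V]

lemma colorable_succ_of_forall_exists_card_filter_adj_le (n : ℕ)
    (h : ∀ s : Finset V, s.Nonempty → ∃ v ∈ s, #{w ∈ s | G.Adj v w} ≤ n) :
    G.Colorable (n + 1) := by
  suffices ∀ s : Finset V, ∃ f : V → Fin (n + 1), ∀ x ∈ s, ∀ y ∈ s, G.Adj x y → f x ≠ f y by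
    obtain ⟨f, hf⟩ := this univ
    exact ⟨Coloring.mk f fun hxy => hf _ (mem_univ _) _ (mem_univ _) hxy⟩
  intro s
  induction s using Finset.strongInduction with
  | H s ih =>
  obtain rfl | hs := s.eq_empty_or_nonempty
  · exact ⟨0, by simp⟩
  obtain ⟨v, hv, hdeg⟩ := h s hs
  obtain ⟨f, hf⟩ := ih (s.erase v) (erase_ssubset hv)
  obtain ⟨i, -, hi⟩ := exists_mem_notMem_of_card_lt_card (t := univ)
    (s := {w ∈ s | G.Adj v w}.image f)
    (by simpa using card_image_le.trans_lt (Nat.lt_succ_of_le hdeg))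
  have hne : ∀ x ∈ s, ∀ y ∈ s, G.Adj x y → x ≠ v →
      Function.update f v i x ≠ Function.update f v i y := by
    intro x hx y hy hxy hxv
    rw [Function.update_of_ne hxv]
    by_cases hyv : y = v
    · subst hyv
      rw [Function.update_self]
      exact fun hfx => hi (mem_image.2 ⟨x, mem_filter.2 ⟨hx, hxy.symm⟩, hfx⟩)
    · rw [Function.update_of_ne hyv]
      exact hf x (mem_erase.2 ⟨hxv, hx⟩) y (mem_erase.2 ⟨hyv, hy⟩) hxy
  refine ⟨Function.update f v i, fun x hx y hy hxy => ?_⟩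
  by_cases hxv : x = v
  · exact (hne y hy x hx hxy.symm (hxv ▸ hxy.ne')).symm
  · exact hne x hx y hy hxy hxv

lemma exists_mul_card_lt_card_interedges_of_not_colorable {n : ℕ} (h : ¬G.Colorable (n + 1)) :
    ∃ s : Finset V, n * #s < #(G.interedges s s) := by
  by_contra! hsparse
  refine h (G.colorable_succ_of_forall_exists_card_filter_adj_le n fun s hs => ?_)
  by_contra! hdeg
  have hsum := sum_lt_sum_of_nonempty hs hdeg
  rw [sum_const, smul_eq_mul, ← card_interedges_self_eq_sum] at hsum
  exact (hsparse s).not_gt (by linarith)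

end Degeneracy

section Connectivity

variable {V : Type*} (G : SimpleGraph V)

lemma isKConnected_induce_of_forall_connected {A : Set V} {k : ℕ} (hk : k < A.ncard)
    (h : ∀ t ⊆ A, t.ncard < k → (G.induce (A \ t)).Connected) :
    IsKConnected (G.induce A) k := by
  refine ⟨by rwa [Nat.card_coe_set_eq], fun U hU => ?_⟩
  have e : (G.induce A).induce Uᶜ ≃g G.induce (A \ Subtype.val '' U) :=
    { toEquiv := (Equiv.Set.image Subtype.val Uᶜ Subtype.val_injective).trans
        (Equiv.setCongr Set.image_val_compl)
      map_rel_iff' := Iff.rfl }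
  refine e.connected_iff.2 (h _ (Subtype.coe_image_subset _ _) ?_)
  rwa [Set.ncard_image_of_injective _ Subtype.val_injective]

lemma induce_connected_of_forall_closed {X : Finset V} (hX : X.Nonempty)
    (h : ∀ P ⊆ X, (∀ x ∈ P, ∀ y ∈ X, G.Adj x y → y ∈ P) → P.Nonempty → X ⊆ P) :
    (G.induce ↑X).Connected := by
  classical
  refine (connected_iff _).2 ⟨fun a b => ?_, hX.coe_sort⟩
  let P : Finset V := {z ∈ X | ∃ hz : z ∈ X, (G.induce ↑X).Reachable a ⟨z, hz⟩}
  have hclosed : ∀ x ∈ P, ∀ y ∈ X, G.Adj x y → y ∈ P := by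
    intro x hx y hy hxy
    obtain ⟨-, hx, hax⟩ := mem_filter.1 hx
    have hxy' : (G.induce ↑X).Adj ⟨x, hx⟩ ⟨y, hy⟩ := hxy
    exact mem_filter.2 ⟨hy, hy, hax.trans hxy'.reachable⟩
  have ha : a.1 ∈ P := mem_filter.2 ⟨a.2, a.2, .rfl⟩
  obtain ⟨-, _, hab⟩ := mem_filter.1 (h P (filter_subset _ _) hclosed ⟨a.1, ha⟩ b.2)
  exact hab

end Connectivity

section Mader

variable {V : Type*} (B : SimpleGraph V) [DecidableRel B.Adj] (k : ℕ)

/-- `interedges` counts every edge twice, so the second condition says that `S` spans more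
than `2k (|S| - k)` edges. -/
def MaderDense (S : Finset V) : Prop :=
  2 * k ≤ #S ∧ 4 * k * (#S - k) < #(B.interedges S S)

variable {B k} {S : Finset V}

lemma MaderDense.two_mul_lt_card (hS : B.MaderDense k S) : 2 * k < #S := by
  refine hS.1.lt_of_ne fun h => hS.2.not_ge ?_
  calc #(B.interedges S S) ≤ #S * (#S - 1) := B.card_interedges_self_le S
    _ ≤ #S * #S := Nat.mul_le_mul_left _ (Nat.sub_le _ _)
    _ = 4 * k * (#S - k) := by rw [← h, show 2 * k - k = k by omega]; ring

variable [DecidableEq V]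

lemma two_mul_add_one_le_card_filter_adj_of_minimal (hS : Minimal (B.MaderDense k) S) :
    ∀ v ∈ S, 2 * k + 1 ≤ #{w ∈ S | B.Adj v w} := by
  intro v hv
  by_contra! hdeg
  have h2k := hS.prop.two_mul_lt_card
  have hcard : #(S.erase v) = #S - 1 := card_erase_of_mem hv
  have herase : ¬B.MaderDense k (S.erase v) := hS.not_prop_of_lt (erase_ssubset hv)
  have hsucc : 4 * k * (#S - k) = 4 * k * (#S - 1 - k) + 4 * k := by
    rw [← Nat.mul_succ]
    congr 1
    omega
  have := B.card_interedges_erase hv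
  have := hS.prop.2
  simp only [MaderDense, hcard, not_and, not_lt] at herase
  have := herase (by omega)
  omega

/-- A closed set `P` of `S \ T` would split `S` into the two smaller sets `P ∪ T` and `S \ P`,
each spanning all the edges incident to it in `S`; both are large by the degree bound, so by
minimality neither is dense, and adding up their edges shows that `S` is not dense either. -/
lemma subset_of_closed_of_minimal (hS : Minimal (B.MaderDense k) S) {T P : Finset V}
    (hTS : T ⊆ S) (hT : #T ≤ k) (hPS : P ⊆ S \ T)
    (hP : ∀ x ∈ P, ∀ y ∈ S \ T, B.Adj x y → y ∈ P) (hPne : P.Nonempty) : S \ T ⊆ P := by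
  intro b hb
  by_contra hbP
  obtain ⟨a, ha⟩ := hPne
  obtain ⟨hbS, hbT⟩ := mem_sdiff.1 hb
  have hPS' : P ⊆ S := hPS.trans sdiff_subset
  have hnbr : ∀ x ∈ P, ∀ y ∈ S, B.Adj x y → y ∈ P ∪ T := by
    intro x hx y hy hxy
    by_cases hyT : y ∈ T
    · exact mem_union_right _ hyT
    · exact mem_union_left _ (hP x hx y (mem_sdiff.2 ⟨hy, hyT⟩) hxy)
  have hcover : ∀ x ∈ S, ∀ y ∈ S, B.Adj x y →
      x ∈ P ∪ T ∧ y ∈ P ∪ T ∨ x ∈ S \ P ∧ y ∈ S \ P := by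
    intro x hx y hy hxy
    by_cases hxP : x ∈ P
    · exact .inl ⟨mem_union_left _ hxP, hnbr x hxP y hy hxy⟩
    by_cases hyP : y ∈ P
    · exact .inl ⟨hnbr y hyP x hx hxy.symm, mem_union_left _ hyP⟩
    exact .inr ⟨mem_sdiff.2 ⟨hx, hxP⟩, mem_sdiff.2 ⟨hy, hyP⟩⟩
  have hdeg := two_mul_add_one_le_card_filter_adj_of_minimal hS
  have h₁ : 2 * k + 1 < #(P ∪ T) :=
    (hdeg a (hPS' ha)).trans_lt (B.card_filter_adj_lt_card (mem_union_left _ ha) (hnbr a ha))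
  have h₂ : 2 * k + 1 < #(S \ P) :=
    (hdeg b hbS).trans_lt <| B.card_filter_adj_lt_card (mem_sdiff.2 ⟨hbS, hbP⟩) fun w hw hbw =>
      mem_sdiff.2 ⟨hw, fun hwP => hbP (hP w hwP b hb hbw.symm)⟩
  have hsmall₁ : ¬B.MaderDense k (P ∪ T) := hS.not_prop_of_lt <|
    (ssubset_iff_of_subset (union_subset hPS' hTS)).2 ⟨b, hbS, by simp [hbP, hbT]⟩
  have hsmall₂ : ¬B.MaderDense k (S \ P) := hS.not_prop_of_lt (sdiff_ssubset hPS' ⟨a, ha⟩)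
  simp only [MaderDense, not_and, not_lt] at hsmall₁ hsmall₂
  have hcard : #(P ∪ T) + #(S \ P) = #S + #T := by
    rw [card_union_of_disjoint (disjoint_of_subset_left hPS sdiff_disjoint),
      card_sdiff_of_subset hPS']
    have := card_le_card hPS'
    omega
  have hsum : 4 * k * (#(P ∪ T) - k) + 4 * k * (#(S \ P) - k) ≤ 4 * k * (#S - k) := by
    rw [← Nat.mul_add]
    exact Nat.mul_le_mul_left _ (by omega)
  have := B.card_interedges_self_le_add hcover
  have := hsmall₁ (by omega)
  have := hsmall₂ (by omega)
  have := hS.prop.2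
  omega

lemma isKConnected_induce_of_minimal (hS : Minimal (B.MaderDense k) S) :
    IsKConnected (B.induce ↑S) (k + 1) := by
  obtain ⟨v, hv⟩ : S.Nonempty := card_pos.1 (by have := hS.prop.two_mul_lt_card; omega)
  have hcard : 2 * k + 1 < #S := (two_mul_add_one_le_card_filter_adj_of_minimal hS v hv).trans_lt
    (B.card_filter_adj_lt_card hv fun w hw _ => hw)
  refine B.isKConnected_induce_of_forall_connected (by rw [Set.ncard_coe_finset]; omega)
    fun t ht htk => ?_
  obtain ⟨T, rfl⟩ := (S.finite_toSet.subset ht).exists_finset_coe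
  rw [Set.ncard_coe_finset] at htk
  rw [coe_subset] at ht
  rw [← coe_sdiff]
  refine B.induce_connected_of_forall_closed ?_ fun P hPS hP hPne =>
    subset_of_closed_of_minimal hS ht (by omega) hPS hP hPne
  exact card_pos.1 (by rw [card_sdiff_of_subset ht]; omega)

/-- Mader's theorem. -/
theorem exists_isKConnected_induce (S : Finset V) (h : 4 * k * #S < #(B.interedges S S)) :
    ∃ R ⊆ S, IsKConnected (B.induce ↑R) (k + 1) := by
  have hS : 4 * k < #S - 1 := by
    refine Nat.lt_of_mul_lt_mul_left (a := #S) ?_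
    rw [mul_comm]
    exact h.trans_le (B.card_interedges_self_le S)
  obtain ⟨R, hRS, hR⟩ := exists_minimal_le_of_wellFoundedLT (B.MaderDense k) S
    ⟨by omega, h.trans_le' (Nat.mul_le_mul_left _ (Nat.sub_le _ _))⟩
  exact ⟨R, hRS, isKConnected_induce_of_minimal hR⟩

end Mader

lemma coe_induce_toSubgraph {V : Type*} {G H : SimpleGraph V} (h : H ≤ G)
    (s : Set V) : ((SimpleGraph.toSubgraph H h).induce s).coe = H.induce s := by
  ext ⟨x, hx⟩ ⟨y, hy⟩
  exact ⟨fun h => h.2.2, fun h => ⟨hx, hy, h⟩⟩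

end SimpleGraph

lemma isKConnected_zero {V : Type*} [Finite V] [Nonempty V] (G : SimpleGraph V) :
    IsKConnected G 0 :=
  ⟨Nat.card_pos, fun _ h => absurd h (Nat.not_lt_zero _)⟩

/-- Every non-null graph G contains a bipartite subgraph H with
κ(H) ≥ max{ d(G)/4, (χ(G) − 1)/8 }. -/
theorem bipartite_connected_subgraph (V : Type u) [Fintype V] [Nonempty V]
    (G : SimpleGraph V) :
    ∃ H : G.Subgraph, IsBipartiteGraph H.coe ∧
      IsKConnected H.coe
        ⌈max (GraphDensity G / 4) (((G.chromaticNumber.toNat : ℝ) - 1) / 8)⌉₊ := by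
  classical
  generalize hk : ⌈max (GraphDensity G / 4) (((G.chromaticNumber.toNat : ℝ) - 1) / 8)⌉₊ = k
  cases k with
  | zero =>
    exact ⟨G.singletonSubgraph (Classical.arbitrary V),
      ⟨fun _ => true, fun _ _ h => absurd h (by simp)⟩, isKConnected_zero _⟩
  | succ k =>
    have hlt : (k : ℝ) < max (GraphDensity G / 4) (((G.chromaticNumber.toNat : ℝ) - 1) / 8) :=
      Nat.lt_ceil.1 (hk ▸ Nat.lt_succ_self k)
    obtain ⟨s, hs⟩ : ∃ s : Finset V, 8 * k * s.card < (G.interedges s s).card := by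
      rcases lt_max_iff.1 hlt with hd | hχ
      · exact ⟨Finset.univ, G.mul_card_lt_card_interedges_univ (by push_cast; linarith)⟩
      · refine G.exists_mul_card_lt_card_interedges_of_not_colorable fun hcol => ?_
        have := ENat.toNat_le_of_le_natCast hcol.chromaticNumber_le
        have : ((G.chromaticNumber.toNat : ℕ) : ℝ) ≤ 8 * k + 1 := by exact_mod_cast this
        linarith
    obtain ⟨c, hc⟩ := G.exists_card_interedges_le_two_mul_cutGraph s
    obtain ⟨R, -, hR⟩ := (G.cutGraph c).exists_isKConnected_induce (k := k) s (by linarith)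
    refine ⟨(SimpleGraph.toSubgraph _ (G.cutGraph_le c)).induce ↑R, ?_, ?_⟩ <;>
      rw [SimpleGraph.coe_induce_toSubgraph]
    · exact ⟨fun x => c x, fun _ _ h => h.2⟩
    · exact hR
end
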